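/- Let n, m ≥ 1, let f̂ : ℝⁿ → ℝ be continuously differentiable, let B be a real m × n matrix of full column rank, let λ > 0, and let 0 < p < 1. Define f(x) = f̂(x) + λ Σ_{i=1}^m |(Bx)_i|^p and f̃(x, μ) = f̂(x) + λ Σ_{i=1}^m s_μ((Bx)_i)^p for μ > 0. Then f̃ satisfies Riemannian gradient sub-consistency on the unit sphere S^{n−1}: for every x ∈ S^{n−1} and every v ∈ ℝⁿ such that Proj_{z_k}(∇_x f̃(z_k, μ_k)) → v for some sequences z_k ∈ S^{n−1} with z_k → x and μ_k → 0⁺, one has v ∈ ∂_R f(x), the Riemannian limiting subdifferential of f at x on the sphere. -/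

import Mathlib

open Filter Topology

/-- The uniform smoothing function of the absolute value:
`s_μ(t) = |t|` if `|t| ≥ μ/2`, and `s_μ(t) = t²/μ + μ/4` if `|t| < μ/2`. -/
noncomputable def sMu (μ t : ℝ) : ℝ := if μ / 2 ≤ |t| then |t| else t ^ 2 / μ + μ / 4

/-- The orthogonal projection onto the tangent space of the unit sphere at `x`:
`Proj_x(v) = v − ⟨v, x⟩x`. -/
noncomputable def sphereProj {n : ℕ} (x v : EuclideanSpace ℝ (Fin n)) :
    EuclideanSpace ℝ (Fin n) :=
  v - (inner ℝ v x : ℝ) • x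

/-- `v` is a Riemannian Fréchet subgradient of `f` at `x ∈ S^{n−1}`: there exist `δ > 0`
and `h` continuously differentiable on the open ball of radius `δ` centered at `x` such
that `f − h` attains a local minimum at `x` relative to the sphere and
`v = Proj_x(∇h(x))`. -/
def IsRFrechetSubgradient {n : ℕ} (f : EuclideanSpace ℝ (Fin n) → ℝ)
    (x v : EuclideanSpace ℝ (Fin n)) : Prop :=
  ∃ δ > (0 : ℝ), ∃ h : EuclideanSpace ℝ (Fin n) → ℝ,
    ContDiffOn ℝ 1 h (Metric.ball x δ) ∧
    (∃ ε > (0 : ℝ), ∀ y, ‖y‖ = 1 → ‖y - x‖ < ε → f x - h x ≤ f y - h y) ∧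
    v = sphereProj x (gradient h x)

/-- `v ∈ ∂_R f(x)`: `v` is a Riemannian limiting subgradient of `f` at `x ∈ S^{n−1}`. -/
def IsRLimitingSubgradient {n : ℕ} (f : EuclideanSpace ℝ (Fin n) → ℝ)
    (x v : EuclideanSpace ℝ (Fin n)) : Prop :=
  ∃ (xk vk : ℕ → EuclideanSpace ℝ (Fin n)),
    (∀ k, ‖xk k‖ = 1) ∧
    Filter.Tendsto xk Filter.atTop (nhds x) ∧
    Filter.Tendsto (fun k => f (xk k)) Filter.atTop (nhds (f x)) ∧
    (∀ k, IsRFrechetSubgradient f (xk k) (vk k)) ∧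
    Filter.Tendsto vk Filter.atTop (nhds v)

/-!
Write `τᵢ = ⟪aᵢ, x⟫` for the rows `aᵢ` of `B`. The gradient of the smoothing at `zₖ` splits into
a convergent part (`∇f̂` and the rows with `τᵢ ≠ 0`, on which `s_μ = |·|` eventually) and a part
`uₖ` in the span of the rows with `τᵢ = 0`. Since `|s_μ'(t) t| ≤ s_μ(t)`, the normal component
`⟪uₖ, zₖ⟫` of `uₖ` tends to `0`, so `uₖ` itself converges to some `w` in that span; in particular
`w ⊥ x`. Then `v` is already a Riemannian Fréchet subgradient at `x`: as test function take `f`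
with `λ|tᵢ|^p` replaced by the linear function `cᵢ tᵢ` on the rows with `τᵢ = 0`, where
`w = ∑ cᵢ aᵢ`; near `0` the cusp of `|t|^p` (`p < 1`) dominates every linear function.
-/

open scoped RealInnerProductSpace

noncomputable def sMuDeriv (μ t : ℝ) : ℝ := max (-1) (min 1 (2 * t / μ))

section Scalar

variable {μ t : ℝ}

lemma sMu_of_le_abs (h : μ / 2 ≤ |t|) : sMu μ t = |t| := if_pos h

lemma sMu_of_abs_le (hμ : 0 < μ) (h : |t| ≤ μ / 2) : sMu μ t = t ^ 2 / μ + μ / 4 := by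
  unfold sMu
  split_ifs with h'
  · rw [← sq_abs t, le_antisymm h h']
    field_simp
    ring
  · rfl

lemma abs_le_sMu (hμ : 0 < μ) (t : ℝ) : |t| ≤ sMu μ t := by
  unfold sMu
  split_ifs
  · rfl
  · have : 0 ≤ (|t| - μ / 2) ^ 2 / μ := by positivity
    have key : (|t| - μ / 2) ^ 2 / μ = t ^ 2 / μ + μ / 4 - |t| := by
      rw [← sq_abs t]; field_simp; ring
    linarith

lemma sMu_le_abs_add (hμ : 0 < μ) (t : ℝ) : sMu μ t ≤ |t| + μ / 2 := by
  unfold sMu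
  split_ifs with h
  · linarith
  · have : t ^ 2 / μ ≤ μ / 4 := by
      rw [div_le_iff₀ hμ, ← sq_abs]; nlinarith [abs_nonneg t]
    linarith [abs_nonneg t]

lemma sMu_pos (hμ : 0 < μ) (t : ℝ) : 0 < sMu μ t := by
  unfold sMu
  split_ifs with h
  · linarith
  · positivity

lemma sMuDeriv_of_le_abs (hμ : 0 < μ) (h : μ / 2 ≤ |t|) : sMuDeriv μ t = SignType.sign t := by
  have : 1 ≤ |2 * t / μ| := by
    rw [abs_div, abs_mul, abs_two, abs_of_pos hμ, le_div_iff₀ hμ]; linarith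
  rcases lt_trichotomy t 0 with ht | rfl | ht
  · have : 2 * t / μ ≤ -1 := by
      rw [abs_of_neg (div_neg_of_neg_of_pos (by linarith) hμ)] at this; linarith
    simp [sMuDeriv, ht, this]
  · simp at h; linarith
  · have : 1 ≤ 2 * t / μ := by rwa [abs_of_pos (by positivity)] at this
    simp [sMuDeriv, ht, this]

lemma sMuDeriv_of_abs_le (hμ : 0 < μ) (h : |t| ≤ μ / 2) : sMuDeriv μ t = 2 * t / μ := by
  have : |2 * t / μ| ≤ 1 := by
    rw [abs_div, abs_mul, abs_two, abs_of_pos hμ, div_le_iff₀ hμ]; linarith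
  obtain ⟨h₁, h₂⟩ := abs_le.mp this
  simp [sMuDeriv, h₁, h₂]

lemma abs_sMuDeriv_le_one (μ t : ℝ) : |sMuDeriv μ t| ≤ 1 :=
  abs_le.mpr ⟨le_max_left _ _, max_le (by norm_num) (min_le_left _ _)⟩

lemma hasDerivAt_sMu (hμ : 0 < μ) (t : ℝ) : HasDerivAt (sMu μ) (sMuDeriv μ t) t := by
  have hin (h : |t| ≤ μ / 2) : HasDerivWithinAt (sMu μ) (sMuDeriv μ t) {s | |s| ≤ μ / 2} t := by
    have hq : HasDerivAt (fun s => s ^ 2 / μ + μ / 4) (2 * t / μ) t := by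
      simpa using ((hasDerivAt_pow 2 t).div_const μ).add_const (μ / 4)
    rw [sMuDeriv_of_abs_le hμ h]
    exact hq.hasDerivWithinAt.congr (fun s hs => sMu_of_abs_le hμ hs) (sMu_of_abs_le hμ h)
  have hout (h : μ / 2 ≤ |t|) :
      HasDerivWithinAt (sMu μ) (sMuDeriv μ t) {s | μ / 2 ≤ |s|} t := by
    have ht : t ≠ 0 := by rintro rfl; simp at h; linarith
    rw [sMuDeriv_of_le_abs hμ h]
    exact (hasDerivAt_abs ht).hasDerivWithinAt.congr (fun s hs => sMu_of_le_abs hs)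
      (sMu_of_le_abs h)
  rcases lt_trichotomy |t| (μ / 2) with h | h | h
  · exact (hin h.le).hasDerivAt ((continuous_abs.tendsto t).eventually (ge_mem_nhds h))
  · have hunion : {s : ℝ | |s| ≤ μ / 2} ∪ {s | μ / 2 ≤ |s|} = Set.univ :=
      Set.eq_univ_of_forall fun s => le_total |s| (μ / 2)
    simpa [hunion] using (hin h.le).union (hout h.ge)
  · exact (hout h.le).hasDerivAt ((continuous_abs.tendsto t).eventually (le_mem_nhds h))

end Scalar

noncomputable def sMuPowDeriv (μ p t : ℝ) : ℝ := sMuDeriv μ t * p * sMu μ t ^ (p - 1)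

lemma hasDerivAt_sMu_rpow {μ : ℝ} (hμ : 0 < μ) (p t : ℝ) :
    HasDerivAt (fun s => sMu μ s ^ p) (sMuPowDeriv μ p t) t :=
  (hasDerivAt_sMu hμ t).rpow_const (Or.inl (sMu_pos hμ t).ne')

lemma abs_sMuPowDeriv_mul_le {μ p : ℝ} (hμ : 0 < μ) (hp : 0 ≤ p) (t : ℝ) :
    |sMuPowDeriv μ p t * t| ≤ p * sMu μ t ^ p := by
  have hs := sMu_pos hμ t
  calc |sMuPowDeriv μ p t * t| = |sMuDeriv μ t| * (p * sMu μ t ^ (p - 1)) * |t| := by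
        rw [sMuPowDeriv, abs_mul, mul_assoc (sMuDeriv μ t), abs_mul,
          abs_of_nonneg (by positivity : 0 ≤ p * sMu μ t ^ (p - 1))]
    _ ≤ 1 * (p * sMu μ t ^ (p - 1)) * sMu μ t := by
        gcongr
        · exact abs_sMuDeriv_le_one μ t
        · exact abs_le_sMu hμ t
    _ = p * sMu μ t ^ p := by
        rw [one_mul, mul_assoc, ← Real.rpow_add_one hs.ne', sub_add_cancel]

noncomputable def absRpowDeriv (p τ : ℝ) : ℝ := SignType.sign τ * p * |τ| ^ (p - 1)

lemma hasDerivAt_abs_rpow_of_ne_zero {τ : ℝ} (hτ : τ ≠ 0) (p : ℝ) :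
    HasDerivAt (fun t => |t| ^ p) (absRpowDeriv p τ) τ :=
  (hasDerivAt_abs hτ).rpow_const (Or.inl (abs_ne_zero.mpr hτ))

section Limits

variable {α : Type*} {l : Filter α} {μ t : α → ℝ} {τ p : ℝ}

lemma tendsto_sMu (hμ0 : ∀ k, 0 < μ k) (hμ : Tendsto μ l (𝓝 0)) (ht : Tendsto t l (𝓝 τ)) :
    Tendsto (fun k => sMu (μ k) (t k)) l (𝓝 |τ|) := by
  have habs : Tendsto (fun k => |t k|) l (𝓝 |τ|) := ht.abs
  have hupper : Tendsto (fun k => |t k| + μ k / 2) l (𝓝 |τ|) := by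
    simpa using habs.add (hμ.div_const 2)
  exact tendsto_of_tendsto_of_tendsto_of_le_of_le habs hupper
    (fun k => abs_le_sMu (hμ0 k) (t k)) (fun k => sMu_le_abs_add (hμ0 k) (t k))

lemma tendsto_sMuDeriv (hμ0 : ∀ k, 0 < μ k) (hμ : Tendsto μ l (𝓝 0))
    (ht : Tendsto t l (𝓝 τ)) (hτ : τ ≠ 0) :
    Tendsto (fun k => sMuDeriv (μ k) (t k)) l (𝓝 (SignType.sign τ)) := by
  have hsign : Tendsto (fun k => (SignType.sign (t k) : ℝ)) l (𝓝 (SignType.sign τ)) :=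
    ((continuous_of_discreteTopology (f := ((↑) : SignType → ℝ))).continuousAt.comp
      (continuousAt_sign_of_ne_zero hτ)).tendsto.comp ht
  refine hsign.congr' ?_
  have hfar : ∀ᶠ k in l, μ k / 2 < |t k| :=
    (hμ.div_const 2).eventually_lt ht.abs (by simpa using abs_pos.mpr hτ)
  filter_upwards [hfar] with k hk
  exact (sMuDeriv_of_le_abs (hμ0 k) hk.le).symm

lemma tendsto_sMuPowDeriv (hμ0 : ∀ k, 0 < μ k) (hμ : Tendsto μ l (𝓝 0))
    (ht : Tendsto t l (𝓝 τ)) (hτ : τ ≠ 0) :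
    Tendsto (fun k => sMuPowDeriv (μ k) p (t k)) l (𝓝 (absRpowDeriv p τ)) :=
  ((tendsto_sMuDeriv hμ0 hμ ht hτ).mul_const p).mul
    ((tendsto_sMu hμ0 hμ ht).rpow_const (Or.inl (abs_ne_zero.mpr hτ)))

lemma tendsto_sMuPowDeriv_mul_of_tendsto_zero (hp : 0 < p) (hμ0 : ∀ k, 0 < μ k)
    (hμ : Tendsto μ l (𝓝 0)) (ht : Tendsto t l (𝓝 0)) :
    Tendsto (fun k => sMuPowDeriv (μ k) p (t k) * t k) l (𝓝 0) := by
  have hbound : Tendsto (fun k => p * sMu (μ k) (t k) ^ p) l (𝓝 0) := by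
    simpa [Real.zero_rpow hp.ne'] using
      ((tendsto_sMu hμ0 hμ ht).rpow_const (Or.inr hp.le)).const_mul p
  exact squeeze_zero_norm (fun k => abs_sMuPowDeriv_mul_le (hμ0 k) hp.le (t k)) hbound

end Limits

lemma eventually_mul_le_mul_abs_rpow {lam p : ℝ} (hlam : 0 < lam) (hp : p < 1) (c : ℝ) :
    ∀ᶠ t in 𝓝 0, c * t ≤ lam * |t| ^ p := by
  have hsmall : ∀ᶠ t : ℝ in 𝓝 0, |c| * |t| ^ (1 - p) < lam := by
    have : Tendsto (fun t : ℝ => |c| * |t| ^ (1 - p)) (𝓝 0) (𝓝 (|c| * |(0 : ℝ)| ^ (1 - p))) :=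
      (continuous_abs.tendsto 0).rpow_const (Or.inr (by linarith)) |>.const_mul _
    rw [abs_zero, Real.zero_rpow (by linarith), mul_zero] at this
    exact this.eventually_lt_const hlam
  filter_upwards [hsmall] with t ht
  rcases eq_or_ne t 0 with rfl | ht0
  · simpa using mul_nonneg hlam.le (Real.zero_rpow_nonneg p)
  have hsplit : |t| = |t| ^ (1 - p) * |t| ^ p := by
    rw [← Real.rpow_add (abs_pos.mpr ht0), sub_add_cancel, Real.rpow_one]
  calc c * t ≤ |c| * |t| := by rw [← abs_mul]; exact le_abs_self _
    _ = (|c| * |t| ^ (1 - p)) * |t| ^ p := by rw [mul_assoc, ← hsplit]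
    _ ≤ lam * |t| ^ p := by gcongr

noncomputable def absRpowMinorant (lam p τ c t : ℝ) : ℝ := if τ = 0 then c * t else lam * |t| ^ p

section AbsRpowMinorant

variable {lam p τ c : ℝ}

lemma absRpowMinorant_of_eq_zero (hτ : τ = 0) : absRpowMinorant lam p τ c = fun t => c * t :=
  funext fun _ => if_pos hτ

lemma absRpowMinorant_of_ne_zero (hτ : τ ≠ 0) :
    absRpowMinorant lam p τ c = fun t => lam * |t| ^ p :=
  funext fun _ => if_neg hτ

lemma absRpowMinorant_self (hp : p ≠ 0) : absRpowMinorant lam p τ c τ = lam * |τ| ^ p := by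
  by_cases hτ : τ = 0
  · simp [absRpowMinorant, hτ, Real.zero_rpow hp]
  · simp [absRpowMinorant, hτ]

lemma eventually_absRpowMinorant_le (hlam : 0 < lam) (hp : p < 1) :
    ∀ᶠ t in 𝓝 τ, absRpowMinorant lam p τ c t ≤ lam * |t| ^ p := by
  by_cases hτ : τ = 0
  · rw [absRpowMinorant_of_eq_zero hτ, hτ]
    exact eventually_mul_le_mul_abs_rpow hlam hp c
  · simp [absRpowMinorant, hτ]

lemma hasDerivAt_absRpowMinorant (hc : τ ≠ 0 → c = 0) :
    HasDerivAt (absRpowMinorant lam p τ c) (lam * absRpowDeriv p τ + c) τ := by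
  by_cases hτ : τ = 0
  · rw [absRpowMinorant_of_eq_zero hτ]
    simpa [absRpowDeriv, hτ] using (hasDerivAt_id τ).const_mul c
  · rw [absRpowMinorant_of_ne_zero hτ, hc hτ, add_zero]
    exact (hasDerivAt_abs_rpow_of_ne_zero hτ p).const_mul lam

lemma contDiffAt_absRpowMinorant : ContDiffAt ℝ 1 (absRpowMinorant lam p τ c) τ := by
  by_cases hτ : τ = 0
  · rw [absRpowMinorant_of_eq_zero hτ]
    fun_prop
  · rw [absRpowMinorant_of_ne_zero hτ]
    exact contDiffAt_const.mul
      ((Real.contDiffAt_rpow_const_of_ne (abs_ne_zero.mpr hτ)).comp τ (contDiffAt_abs hτ))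

end AbsRpowMinorant

section Gradient

variable {E : Type*} [NormedAddCommGroup E] [InnerProductSpace ℝ E] [CompleteSpace E]

lemma HasGradientAt.add_sum_comp_inner {ι : Type*} [Fintype ι] {f : E → ℝ} {g z : E}
    (hf : HasGradientAt f g z) (a : ι → E) {φ : ι → ℝ → ℝ} {d : ι → ℝ}
    (hφ : ∀ i, HasDerivAt (φ i) (d i) ⟪a i, z⟫) :
    HasGradientAt (fun y => f y + ∑ i, φ i ⟪a i, y⟫) (g + ∑ i, d i • a i) z := by
  rw [hasGradientAt_iff_hasFDerivAt] at hf ⊢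
  have hterm i : HasFDerivAt (fun y => φ i ⟪a i, y⟫) (d i • innerSL ℝ (a i)) z :=
    (hφ i).comp_hasFDerivAt z (innerSL ℝ (a i)).hasFDerivAt
  refine (hf.add (HasFDerivAt.fun_sum (u := Finset.univ) fun i _ => hterm i)).congr_fderiv ?_
  ext y
  simp

lemma ContDiff.continuous_gradient {f : E → ℝ} (hf : ContDiff ℝ 1 f) : Continuous (gradient f) :=
  (InnerProductSpace.toDual ℝ E).symm.continuous.comp (hf.continuous_fderiv one_ne_zero)

end Gradient

section Sphere

variable {n : ℕ}

lemma sphereProj_add (x u v : EuclideanSpace ℝ (Fin n)) :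
    sphereProj x (u + v) = sphereProj x u + sphereProj x v := by
  simp only [sphereProj, inner_add_left, add_smul]
  abel

lemma sphereProj_of_inner_eq_zero {x w : EuclideanSpace ℝ (Fin n)} (h : ⟪w, x⟫ = 0) :
    sphereProj x w = w := by
  simp [sphereProj, h]

lemma Filter.Tendsto.sphereProj {α : Type*} {l : Filter α} {z u : α → EuclideanSpace ℝ (Fin n)}
    {x g : EuclideanSpace ℝ (Fin n)} (hz : Tendsto z l (𝓝 x)) (hu : Tendsto u l (𝓝 g)) :
    Tendsto (fun k => _root_.sphereProj (z k) (u k)) l (𝓝 (_root_.sphereProj x g)) :=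
  hu.sub ((hu.inner hz).smul hz)

lemma sub_sphereProj_mem_of_tendsto {α : Type*} {l : Filter α} [l.NeBot]
    (K : Submodule ℝ (EuclideanSpace ℝ (Fin n))) {z d u : α → EuclideanSpace ℝ (Fin n)}
    {x D v : EuclideanSpace ℝ (Fin n)} (hz : Tendsto z l (𝓝 x)) (hd : Tendsto d l (𝓝 D))
    (hu : ∀ k, u k ∈ K) (hinner : Tendsto (fun k => ⟪u k, z k⟫) l (𝓝 0))
    (hv : Tendsto (fun k => sphereProj (z k) (d k + u k)) l (𝓝 v)) :
    v - sphereProj x D ∈ K := by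
  have hproj : Tendsto (fun k => sphereProj (z k) (u k)) l (𝓝 (v - sphereProj x D)) := by
    simpa [sphereProj_add] using hv.sub (hz.sphereProj hd)
  have hlim : Tendsto u l (𝓝 (v - sphereProj x D)) := by
    simpa [sphereProj] using hproj.add (hinner.smul hz)
  exact K.closed_of_finiteDimensional.mem_of_tendsto hlim (Eventually.of_forall hu)

end Sphere

section Subgradient

variable {n : ℕ} {f h : EuclideanSpace ℝ (Fin n) → ℝ} {x v : EuclideanSpace ℝ (Fin n)}

lemma isRFrechetSubgradient_of_eventually_le (hh : ContDiffAt ℝ 1 h x)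
    (hmin : ∀ᶠ y in 𝓝 x, f x - h x ≤ f y - h y) :
    IsRFrechetSubgradient f x (sphereProj x (gradient h x)) := by
  obtain ⟨δ, hδ, hball⟩ := Metric.eventually_nhds_iff.mp (hh.eventually (by simp))
  obtain ⟨ε, hε, hmin⟩ := Metric.eventually_nhds_iff.mp hmin
  exact ⟨δ, hδ, h, fun y hy => (hball hy).contDiffWithinAt,
    ⟨ε, hε, fun y _ hy => hmin (by rwa [dist_eq_norm])⟩, rfl⟩

lemma IsRFrechetSubgradient.isRLimitingSubgradient (hx : ‖x‖ = 1)
    (hv : IsRFrechetSubgradient f x v) : IsRLimitingSubgradient f x v :=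
  ⟨fun _ => x, fun _ => v, fun _ => hx, tendsto_const_nhds, tendsto_const_nhds, fun _ => hv,
    tendsto_const_nhds⟩

end Subgradient

lemma Submodule.exists_sum_smul_eq_of_mem_span_image {R ι M : Type*} [Semiring R] [Fintype ι]
    [AddCommMonoid M] [Module R M] {a : ι → M} {s : Set ι} {w : M}
    (hw : w ∈ Submodule.span R (a '' s)) :
    ∃ c : ι → R, (∀ i ∉ s, c i = 0) ∧ ∑ i, c i • a i = w := by
  obtain ⟨c, hc, rfl⟩ := (Finsupp.mem_span_image_iff_linearCombination R).mp hw
  refine ⟨c, fun i hi => Finsupp.notMem_support_iff.mp fun h => hi (hc h), ?_⟩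
  rw [Finsupp.linearCombination_apply, Finsupp.sum_fintype _ _ (by simp)]

section LpComposite

variable {E : Type*} [NormedAddCommGroup E] [InnerProductSpace ℝ E] {ι : Type*} [Fintype ι]

noncomputable def lpObjective (fhat : E → ℝ) (a : ι → E) (lam p : ℝ) (y : E) : ℝ :=
  fhat y + lam * ∑ i, |⟪a i, y⟫| ^ p

noncomputable def lpSmoothing (fhat : E → ℝ) (a : ι → E) (lam p μ : ℝ) (y : E) : ℝ :=
  fhat y + lam * ∑ i, sMu μ ⟪a i, y⟫ ^ p

lemma hasGradientAt_lpSmoothing [CompleteSpace E] {fhat : E → ℝ} {z : E}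
    (hfhat : DifferentiableAt ℝ fhat z) (a : ι → E) (lam p : ℝ) {μ : ℝ} (hμ : 0 < μ) :
    HasGradientAt (lpSmoothing fhat a lam p μ)
      (gradient fhat z + ∑ i, (lam * sMuPowDeriv μ p ⟪a i, z⟫) • a i) z := by
  have h := hfhat.hasGradientAt.add_sum_comp_inner a
    fun i => (hasDerivAt_sMu_rpow hμ p ⟪a i, z⟫).const_mul lam
  convert h using 1
  ext y
  simp [lpSmoothing, Finset.mul_sum]

end LpComposite

section LpSubgradient

variable {n : ℕ} {ι : Type*} [Fintype ι] {fhat : EuclideanSpace ℝ (Fin n) → ℝ}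
  {a : ι → EuclideanSpace ℝ (Fin n)} {lam p : ℝ}

theorem sub_sphereProj_mem_span_of_tendsto (hfhat : ContDiff ℝ 1 fhat) (hp : 0 < p)
    {α : Type*} {l : Filter α} [l.NeBot] {z : α → EuclideanSpace ℝ (Fin n)} {μ : α → ℝ}
    {x v : EuclideanSpace ℝ (Fin n)} (hz : Tendsto z l (𝓝 x)) (hμ0 : ∀ k, 0 < μ k)
    (hμ : Tendsto μ l (𝓝 0))
    (hv : Tendsto (fun k => sphereProj (z k) (gradient (lpSmoothing fhat a lam p (μ k)) (z k)))
      l (𝓝 v)) :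
    v - sphereProj x (gradient fhat x + ∑ i, (lam * absRpowDeriv p ⟪a i, x⟫) • a i) ∈
      Submodule.span ℝ (a '' {i | ⟪a i, x⟫ = 0}) := by
  set c : α → ι → ℝ := fun k i => lam * sMuPowDeriv (μ k) p ⟪a i, z k⟫
  have ht i : Tendsto (fun k => ⟪a i, z k⟫) l (𝓝 ⟪a i, x⟫) := tendsto_const_nhds.inner hz
  refine sub_sphereProj_mem_of_tendsto _ hz
    (d := fun k => gradient fhat (z k) + ∑ i, (if ⟪a i, x⟫ = 0 then 0 else c k i) • a i)
    (u := fun k => ∑ i, (if ⟪a i, x⟫ = 0 then c k i else 0) • a i) ?hd ?hu ?hinner ?hproj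
  case hd =>
    refine ((hfhat.continuous_gradient.tendsto x).comp hz).add
      (tendsto_finsetSum _ fun i _ => Tendsto.smul_const ?_ (a i))
    by_cases hτ : ⟪a i, x⟫ = 0
    · simp [hτ, absRpowDeriv]
    · simpa [hτ, c] using (tendsto_sMuPowDeriv hμ0 hμ (ht i) hτ).const_mul lam
  case hu =>
    refine fun k => Submodule.sum_mem _ fun i _ => ?_
    split_ifs with hτ
    · exact Submodule.smul_mem _ _ (Submodule.subset_span ⟨i, hτ, rfl⟩)
    · simp
  case hinner =>
    have hterm i :
        Tendsto (fun k => (if ⟪a i, x⟫ = 0 then c k i else 0) * ⟪a i, z k⟫) l (𝓝 0) := by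
      by_cases hτ : ⟪a i, x⟫ = 0
      · have := (tendsto_sMuPowDeriv_mul_of_tendsto_zero hp hμ0 hμ (hτ ▸ ht i)).const_mul lam
        simpa [hτ, c, mul_assoc] using this
      · simp [hτ]
    simpa only [sum_inner, real_inner_smul_left, Finset.sum_const_zero] using
      tendsto_finsetSum Finset.univ fun i _ => hterm i
  case hproj =>
    refine hv.congr fun k => ?_
    rw [(hasGradientAt_lpSmoothing (hfhat.differentiable one_ne_zero _) a lam p (hμ0 k)).gradient,
      add_assoc, ← Finset.sum_add_distrib]
    congr 3 with i
    split_ifs <;> simp [c]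

theorem isRFrechetSubgradient_lpObjective {x w : EuclideanSpace ℝ (Fin n)}
    (hfhat : ContDiffAt ℝ 1 fhat x) (hlam : 0 < lam) (hp0 : 0 < p) (hp1 : p < 1)
    (hw : w ∈ Submodule.span ℝ (a '' {i | ⟪a i, x⟫ = 0})) :
    IsRFrechetSubgradient (lpObjective fhat a lam p) x
      (sphereProj x (gradient fhat x + ∑ i, (lam * absRpowDeriv p ⟪a i, x⟫) • a i) + w) := by
  obtain ⟨c, hc, rfl⟩ := Submodule.exists_sum_smul_eq_of_mem_span_image hw
  set h := fun y => fhat y + ∑ i, absRpowMinorant lam p ⟪a i, x⟫ (c i) ⟪a i, y⟫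
  have hgrad : HasGradientAt h
      (gradient fhat x + ∑ i, (lam * absRpowDeriv p ⟪a i, x⟫ + c i) • a i) x :=
    (hfhat.differentiableAt one_ne_zero).hasGradientAt.add_sum_comp_inner a
      fun i => hasDerivAt_absRpowMinorant (hc i)
  have hsmooth : ContDiffAt ℝ 1 h x :=
    hfhat.add (ContDiffAt.sum fun i _ =>
      contDiffAt_absRpowMinorant.comp x (innerSL ℝ (a i)).contDiff.contDiffAt)
  have hmin : ∀ᶠ y in 𝓝 x,
      lpObjective fhat a lam p x - h x ≤ lpObjective fhat a lam p y - h y := by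
    have hloc : ∀ᶠ y in 𝓝 x, ∀ i,
        absRpowMinorant lam p ⟪a i, x⟫ (c i) ⟪a i, y⟫ ≤ lam * |⟪a i, y⟫| ^ p :=
      eventually_all.2 fun i => (tendsto_const_nhds.inner tendsto_id).eventually
        (eventually_absRpowMinorant_le hlam hp1)
    filter_upwards [hloc] with y hy
    have := Finset.sum_le_sum fun i (_ : i ∈ Finset.univ) => hy i
    simp only [lpObjective, h, absRpowMinorant_self hp0.ne', Finset.mul_sum] at this ⊢
    linarith
  have htangent : ⟪∑ i, c i • a i, x⟫ = 0 := by
    simp only [sum_inner, real_inner_smul_left]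
    refine Finset.sum_eq_zero fun i _ => ?_
    by_cases hτ : ⟪a i, x⟫ = 0
    · rw [hτ, mul_zero]
    · rw [hc i hτ, zero_mul]
  convert isRFrechetSubgradient_of_eventually_le hsmooth hmin using 1
  simp only [hgrad.gradient, add_smul, Finset.sum_add_distrib, ← add_assoc, sphereProj_add,
    sphereProj_of_inner_eq_zero htangent]

theorem isRLimitingSubgradient_lpObjective_of_tendsto (hfhat : ContDiff ℝ 1 fhat) (hlam : 0 < lam)
    (hp0 : 0 < p) (hp1 : p < 1) {α : Type*} {l : Filter α} [l.NeBot]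
    {z : α → EuclideanSpace ℝ (Fin n)} {μ : α → ℝ} {x v : EuclideanSpace ℝ (Fin n)}
    (hx : ‖x‖ = 1) (hz : Tendsto z l (𝓝 x)) (hμ0 : ∀ k, 0 < μ k) (hμ : Tendsto μ l (𝓝 0))
    (hv : Tendsto (fun k => sphereProj (z k) (gradient (lpSmoothing fhat a lam p (μ k)) (z k)))
      l (𝓝 v)) :
    IsRLimitingSubgradient (lpObjective fhat a lam p) x v := by
  have hw := sub_sphereProj_mem_span_of_tendsto hfhat hp0 hz hμ0 hμ hv
  have hfrechet := isRFrechetSubgradient_lpObjective hfhat.contDiffAt hlam hp0 hp1 hw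
  simpa using hfrechet.isRLimitingSubgradient hx

end LpSubgradient

lemma Matrix.mulVec_euclidean_apply {m n : Type*} [Fintype n] (B : Matrix m n ℝ)
    (y : EuclideanSpace ℝ n) (i : m) : B.mulVec y i = ⟪WithLp.toLp 2 (B i), y⟫ := by
  simp [Matrix.mulVec, dotProduct, PiLp.inner_apply, mul_comm]

theorem riemannian_gradient_subconsistency_lp_general (n m : ℕ)
    (fhat : EuclideanSpace ℝ (Fin n) → ℝ) (hfhat : ContDiff ℝ 1 fhat)
    (B : Matrix (Fin m) (Fin n) ℝ)
    (lam : ℝ) (hlam : 0 < lam) (p : ℝ) (hp0 : 0 < p) (hp1 : p < 1) :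
    ∀ (x v : EuclideanSpace ℝ (Fin n)), ‖x‖ = 1 →
      (∃ (z : ℕ → EuclideanSpace ℝ (Fin n)) (μ : ℕ → ℝ),
        (∀ k, ‖z k‖ = 1) ∧ Filter.Tendsto z Filter.atTop (nhds x) ∧ (∀ k, 0 < μ k) ∧
        Filter.Tendsto μ Filter.atTop (nhds 0) ∧
        Filter.Tendsto (fun k => sphereProj (z k) (gradient
            (fun y => fhat y + lam * ∑ i, sMu (μ k) (B.mulVec y i) ^ p) (z k)))
          Filter.atTop (nhds v)) →
      IsRLimitingSubgradient
        (fun y => fhat y + lam * ∑ i, |B.mulVec y i| ^ p) x v := by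
  rintro x v hx ⟨z, μ, -, hz, hμ0, hμ, hv⟩
  simp only [B.mulVec_euclidean_apply] at hv ⊢
  exact isRLimitingSubgradient_lpObjective_of_tendsto hfhat hlam hp0 hp1 hx hz hμ0 hμ hv

/-- Riemannian gradient sub-consistency on the unit sphere of the smoothing
`f̃(x,μ) = f̂(x) + λ Σᵢ s_μ((Bx)ᵢ)ᵖ` of `f(x) = f̂(x) + λ Σᵢ |(Bx)ᵢ|ᵖ`, where `f̂` is
continuously differentiable, `B` has full column rank, `λ > 0`, and `0 < p < 1`:
for `x ∈ S^{n−1}`, every limit `v` of `Proj_{z_k}(∇ₓ f̃(z_k, μ_k))` along sequences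
`z_k ∈ S^{n−1}`, `z_k → x`, `μ_k → 0⁺` belongs to `∂_R f(x)`. -/
theorem riemannian_gradient_subconsistency_lp (n m : ℕ) (hn : 1 ≤ n) (hm : 1 ≤ m)
    (fhat : EuclideanSpace ℝ (Fin n) → ℝ) (hfhat : ContDiff ℝ 1 fhat)
    (B : Matrix (Fin m) (Fin n) ℝ) (hB : Function.Injective B.mulVec)
    (lam : ℝ) (hlam : 0 < lam) (p : ℝ) (hp0 : 0 < p) (hp1 : p < 1) :
    ∀ (x v : EuclideanSpace ℝ (Fin n)), ‖x‖ = 1 →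
      (∃ (z : ℕ → EuclideanSpace ℝ (Fin n)) (μ : ℕ → ℝ),
        (∀ k, ‖z k‖ = 1) ∧ Filter.Tendsto z Filter.atTop (nhds x) ∧ (∀ k, 0 < μ k) ∧
        Filter.Tendsto μ Filter.atTop (nhds 0) ∧
        Filter.Tendsto (fun k => sphereProj (z k) (gradient
            (fun y => fhat y + lam * ∑ i, sMu (μ k) (B.mulVec y i) ^ p) (z k)))
          Filter.atTop (nhds v)) →
      IsRLimitingSubgradient
        (fun y => fhat y + lam * ∑ i, |B.mulVec y i| ^ p) x v :=
  riemannian_gradient_subconsistency_lp_general n m fhat hfhat B lam hlam p hp0 hp1
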